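/- arXiv:1812.00566 — 11 statements merged into one kernel-verified Lean document; each statement's English description precedes it below -/
import Mathlib

section
/- If λ = (λ₁ ≥ λ₂ ≥ ... ≥ λ_r) is a partition and λ' is defined by λ'_i = i·λ_i + (λ_{i+1} + λ_{i+2} + ... + λ_r), then λ' is a sequentially congruent partition, i.e., λ'_i ≡ λ'_{i+1} (mod i) for 1 ≤ i ≤ r−1 and λ'_r ≡ 0 (mod r). -/
/-- A partition represented as a weakly decreasing list of positive integers. -/
def IsPartition (l : List ℕ) : Prop :=
  l.Pairwise (· ≥ ·) ∧ ∀ x ∈ l, 0 < x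

/-- Sequentially congruent: `λ_i ≡ λ_{i+1} (mod i)` for `1 ≤ i ≤ r-1` and `λ_r ≡ 0 (mod r)`
(0-indexed, with the convention `λ_{r+1} = 0`). -/
def SeqCongruent (l : List ℕ) : Prop :=
  ∀ j < l.length, l.getD j 0 ≡ l.getD (j+1) 0 [MOD j+1]

/-- The map `π`: `π(λ)_i = i·λ_i + Σ_{j=i+1}^r λ_j` (1-indexed). -/
def piMap (l : List ℕ) : List ℕ :=
  (List.range l.length).map (fun j => (j+1) * l.getD j 0 + (l.drop (j+1)).sum)

/-- The map `σ`: the partition in which `i` occurs with frequency `(φ_i - φ_{i+1})/i`. -/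
def sigmaMap (l : List ℕ) : List ℕ :=
  ((List.range l.length).reverse).flatMap
    (fun j => List.replicate ((l.getD j 0 - l.getD (j+1) 0) / (j+1)) (j+1))

/-- The conjugate partition: its `i`-th part is the number of parts of `l` that are `≥ i`. -/
def conj (l : List ℕ) : List ℕ :=
  (List.range (l.getD 0 0)).map (fun i => l.countP (fun x => decide (i + 1 ≤ x)))

/-- Frequency congruent: each part `i` occurs with frequency divisible by `i`. -/
def FreqCongruent (l : List ℕ) : Prop :=
  ∀ i, 0 < i → i ∣ l.count i

/-!
Both `π(λ)_i` and `π(λ)_{i+1}` equal `i` times a part plus the tail sum `λ_{i+1} + ⋯ + λ_r`,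
since `(i+1)·λ_{i+1} + Σ_{j>i+1} λ_j = i·λ_{i+1} + Σ_{j>i} λ_j`; hence they agree mod `i`.
Reading out-of-range entries as `0`, both identities hold at every index, so the last
congruence `π(λ)_r ≡ 0 (mod r)` is the same computation.
-/

lemma piMap_getD (l : List ℕ) (j : ℕ) :
    (piMap l).getD j 0 = (j + 1) * l.getD j 0 + (l.drop (j + 1)).sum := by
  rcases lt_or_ge j l.length with hj | hj
  · rw [piMap, List.getD_eq_getElem _ _ (by simpa using hj)]
    simp
  · rw [List.getD_eq_default _ _ (by simpa [piMap] using hj), List.getD_eq_default _ _ hj,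
      List.drop_of_length_le (by omega)]
    simp

lemma piMap_getD_succ (l : List ℕ) (j : ℕ) :
    (piMap l).getD (j + 1) 0 = (j + 1) * l.getD (j + 1) 0 + (l.drop (j + 1)).sum := by
  rw [piMap_getD]
  rcases lt_or_ge (j + 1) l.length with hj | hj
  · rw [List.drop_eq_getElem_cons hj, List.getD_eq_getElem _ _ hj, List.sum_cons]
    ring
  · rw [List.getD_eq_default _ _ hj, List.drop_of_length_le hj, List.drop_of_length_le (by omega)]
    simp

theorem stmt0_general (l : List ℕ) : SeqCongruent (piMap l) := by
  intro j _
  rw [piMap_getD, piMap_getD_succ, Nat.ModEq, Nat.mul_add_mod, Nat.mul_add_mod]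

theorem stmt0 (l : List ℕ) (hl : IsPartition l) : SeqCongruent (piMap l) :=
  stmt0_general l
end

section
/- The map π defined by π(λ)_i = i·λ_i + Σ_{j=i+1}^{r} λ_j is injective on partitions: given a sequentially congruent partition λ', the original partition λ is uniquely recovered by λ_r = λ'_r / r and λ_i = (λ'_i − Σ_{j=i+1}^{r} λ_j)/i for i = r−1, ..., 1. -/
theorem List.eq_of_getElem_eq_of_drop_succ_eq {α : Type*} :
    ∀ {l₁ l₂ : List α}, l₁.length = l₂.length →
      (∀ j (hj₁ : j < l₁.length) (hj₂ : j < l₂.length),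
        l₁.drop (j + 1) = l₂.drop (j + 1) → l₁[j] = l₂[j]) → l₁ = l₂
  | [], [], _, _ => rfl
  | a :: t₁, b :: t₂, hlen, h => by
    have htail : t₁ = t₂ := List.eq_of_getElem_eq_of_drop_succ_eq (by simpa using hlen)
      fun j hj₁ hj₂ hdrop => h (j + 1) (by simpa using hj₁) (by simpa using hj₂) hdrop
    have hhead : a = b := h 0 (by simp) (by simp) (by simpa using htail)
    rw [hhead, htail]

theorem length_piMap (l : List ℕ) : (piMap l).length = l.length := by
  simp [piMap]

theorem getElem_piMap (l : List ℕ) (j : ℕ) (hj : j < (piMap l).length) :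
    (piMap l)[j] = (j + 1) * l[j]'(length_piMap l ▸ hj) + (l.drop (j + 1)).sum := by
  simp [piMap, List.getElem?_eq_getElem (length_piMap l ▸ hj)]

theorem stmt3_general (l₁ l₂ : List ℕ) (h : piMap l₁ = piMap l₂) : l₁ = l₂ := by
  have hlen : l₁.length = l₂.length := by
    simpa only [length_piMap] using congrArg List.length h
  refine List.eq_of_getElem_eq_of_drop_succ_eq hlen fun j hj₁ hj₂ hdrop => ?_
  have hj : (piMap l₁)[j]'(by rwa [length_piMap]) = (piMap l₂)[j]'(by rwa [length_piMap]) :=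
    List.getElem_of_eq h _
  rw [getElem_piMap, getElem_piMap, hdrop] at hj
  exact Nat.eq_of_mul_eq_mul_left j.succ_pos (Nat.add_right_cancel hj)

theorem stmt3 (l₁ l₂ : List ℕ) (h₁ : IsPartition l₁) (h₂ : IsPartition l₂)
    (h : piMap l₁ = piMap l₂) : l₁ = l₂ :=
  stmt3_general l₁ l₂ h
end

section
/- The map π given by π(λ)_i = i·λ_i + Σ_{j=i+1}^{r} λ_j is a bijection from the set of all partitions of n onto the set of sequentially congruent partitions whose largest part equals n. -/
/-!
Consecutive parts of `π(λ)` differ by `i (λ_i - λ_{i+1})` (with `λ_{r+1} = 0`), so `π(λ)` is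
weakly decreasing with consecutive differences divisible by their index, i.e. sequentially
congruent, and its largest part is `λ_1 + ⋯ + λ_r = n`. Conversely, dividing the consecutive
differences of a sequentially congruent `μ` by their indices and summing them from the right
gives the unique preimage of `μ`. Both directions go by induction on the parts, with the
index `k + 1` of the first part as a parameter.
-/

def piFrom (k : ℕ) : List ℕ → List ℕ
  | [] => []
  | a :: l => ((k + 1) * a + l.sum) :: piFrom (k + 1) l

def unPiFrom (k : ℕ) : List ℕ → List ℕ
  | [] => []
  | b :: m => ((b - m.headD 0) / (k + 1) + (unPiFrom (k + 1) m).headD 0) :: unPiFrom (k + 1) m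

def SeqCongruentFrom (k : ℕ) : List ℕ → Prop
  | [] => True
  | a :: l => a ≡ l.headD 0 [MOD k + 1] ∧ SeqCongruentFrom (k + 1) l

lemma isChain_ge_cons_iff {a : ℕ} {l : List ℕ} :
    (a :: l).IsChain (· ≥ ·) ↔ l.headD 0 ≤ a ∧ l.IsChain (· ≥ ·) := by
  cases l <;> simp [List.isChain_cons_cons]

lemma isPartition_iff {l : List ℕ} :
    IsPartition l ↔ l.IsChain (· ≥ ·) ∧ ∀ x ∈ l, 0 < x := by
  rw [IsPartition, List.isChain_iff_pairwise]

lemma seqCongruentFrom_iff (k : ℕ) (l : List ℕ) :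
    SeqCongruentFrom k l ↔ ∀ j < l.length, l.getD j 0 ≡ l.getD (j + 1) 0 [MOD j + k + 1] := by
  induction l generalizing k with
  | nil => simp [SeqCongruentFrom]
  | cons a l ih =>
    rw [SeqCongruentFrom, ih, List.length_cons, Nat.forall_lt_succ_left]
    cases l <;> simp [Nat.add_right_comm _ 1 k, Nat.add_assoc]

lemma seqCongruent_iff_seqCongruentFrom_zero {l : List ℕ} :
    SeqCongruent l ↔ SeqCongruentFrom 0 l := by
  simp [seqCongruentFrom_iff, SeqCongruent]

lemma piFrom_eq_map_range (k : ℕ) (l : List ℕ) :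
    piFrom k l = (List.range l.length).map
      (fun j => (j + 1 + k) * l.getD j 0 + (l.drop (j + 1)).sum) := by
  induction l generalizing k with
  | nil => rfl
  | cons a l ih =>
    rw [piFrom, ih, List.length_cons, List.range_succ_eq_map, List.map_cons, List.map_map]
    congr 1
    · simp [Nat.add_comm]
    · refine List.map_congr_left fun j _ => ?_
      simp only [Function.comp_apply, Nat.succ_eq_add_one, List.getD_cons_succ, List.drop_succ_cons]
      ring

lemma piMap_eq_piFrom_zero (l : List ℕ) : piMap l = piFrom 0 l := by
  rw [piFrom_eq_map_range]; rfl

lemma headD_piFrom (k : ℕ) (l : List ℕ) : (piFrom k l).headD 0 = k * l.headD 0 + l.sum := by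
  cases l <;> simp [piFrom]; ring

lemma piFrom_cons_of_le {k a : ℕ} {l : List ℕ} (h : l.headD 0 ≤ a) :
    piFrom k (a :: l) =
      ((k + 1) * (a - l.headD 0) + (piFrom (k + 1) l).headD 0) :: piFrom (k + 1) l := by
  rw [piFrom, headD_piFrom, Nat.mul_sub, ← Nat.add_assoc,
    Nat.sub_add_cancel (Nat.mul_le_mul_left _ h)]

lemma isChain_piFrom {k : ℕ} {l : List ℕ} (hl : l.IsChain (· ≥ ·)) :
    (piFrom k l).IsChain (· ≥ ·) := by
  induction l generalizing k with
  | nil => exact .nil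
  | cons a l ih =>
    obtain ⟨hle, hl⟩ := isChain_ge_cons_iff.mp hl
    rw [piFrom_cons_of_le hle]
    exact isChain_ge_cons_iff.mpr ⟨Nat.le_add_left _ _, ih hl⟩

lemma seqCongruentFrom_piFrom {k : ℕ} {l : List ℕ} (hl : l.IsChain (· ≥ ·)) :
    SeqCongruentFrom k (piFrom k l) := by
  induction l generalizing k with
  | nil => trivial
  | cons a l ih =>
    obtain ⟨hle, hl⟩ := isChain_ge_cons_iff.mp hl
    rw [piFrom_cons_of_le hle]
    exact ⟨Nat.mul_add_mod _ _ _, ih hl⟩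

lemma pos_of_mem_piFrom {k : ℕ} {l : List ℕ} (hl : ∀ x ∈ l, 0 < x) :
    ∀ x ∈ piFrom k l, 0 < x := by
  induction l generalizing k with
  | nil => simp [piFrom]
  | cons a l ih =>
    simp only [piFrom, List.mem_cons, forall_eq_or_imp] at hl ⊢
    exact ⟨Nat.add_pos_left (Nat.mul_pos k.succ_pos hl.1) _, ih hl.2⟩

lemma unPiFrom_piFrom {k : ℕ} {l : List ℕ} (hl : l.IsChain (· ≥ ·)) :
    unPiFrom k (piFrom k l) = l := by
  induction l generalizing k with
  | nil => rfl
  | cons a l ih =>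
    obtain ⟨hle, hl⟩ := isChain_ge_cons_iff.mp hl
    rw [piFrom_cons_of_le hle, unPiFrom, Nat.add_sub_cancel, ih hl,
      Nat.mul_div_cancel_left _ k.succ_pos, Nat.sub_add_cancel hle]

lemma piFrom_unPiFrom {k : ℕ} {m : List ℕ} (hm : m.IsChain (· ≥ ·))
    (hc : SeqCongruentFrom k m) :
    piFrom k (unPiFrom k m) = m := by
  induction m generalizing k with
  | nil => rfl
  | cons b m ih =>
    obtain ⟨hle, hm⟩ := isChain_ge_cons_iff.mp hm
    obtain ⟨hmod, hc⟩ := hc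
    have hdvd : k + 1 ∣ b - m.headD 0 := (Nat.modEq_iff_dvd' hle).mp hmod.symm
    rw [unPiFrom, piFrom_cons_of_le (Nat.le_add_left _ _), Nat.add_sub_cancel, ih hm hc,
      Nat.mul_div_cancel' hdvd, Nat.sub_add_cancel hle]

lemma isChain_unPiFrom (k : ℕ) (m : List ℕ) : (unPiFrom k m).IsChain (· ≥ ·) := by
  induction m generalizing k with
  | nil => exact .nil
  | cons b m ih => exact isChain_ge_cons_iff.mpr ⟨Nat.le_add_left _ _, ih (k + 1)⟩

lemma pos_of_mem_unPiFrom {k : ℕ} {m : List ℕ} (hc : SeqCongruentFrom k m)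
    (hm : ∀ x ∈ m, 0 < x) : ∀ x ∈ unPiFrom k m, 0 < x := by
  induction m generalizing k with
  | nil => simp [unPiFrom]
  | cons b m ih =>
    simp only [List.mem_cons, forall_eq_or_imp] at hm
    have htail := ih hc.2 hm.2
    refine List.forall_mem_cons.mpr ⟨?_, htail⟩
    cases m with
    | nil =>
      have hdvd : k + 1 ∣ b := Nat.modEq_zero_iff_dvd.mp hc.1
      simpa [unPiFrom] using Nat.div_pos (Nat.le_of_dvd hm.1 hdvd) k.succ_pos
    | cons c m =>
      have hne : unPiFrom (k + 1) (c :: m) ≠ [] := by simp [unPiFrom]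
      obtain ⟨y, ys, hys⟩ := List.exists_cons_of_ne_nil hne
      rw [hys] at htail ⊢
      exact Nat.lt_add_left _ (htail y List.mem_cons_self)

theorem stmt4 (n : ℕ) :
    Set.BijOn piMap {l : List ℕ | IsPartition l ∧ l.sum = n}
      {l : List ℕ | IsPartition l ∧ SeqCongruent l ∧ l.getD 0 0 = n} := by
  refine ⟨?_, ?_, ?_⟩
  · rintro l ⟨hl, rfl⟩
    obtain ⟨hchain, hpos⟩ := isPartition_iff.mp hl
    refine ⟨isPartition_iff.mpr ⟨?_, ?_⟩, ?_, ?_⟩ <;> rw [piMap_eq_piFrom_zero]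
    · exact isChain_piFrom hchain
    · exact pos_of_mem_piFrom hpos
    · exact seqCongruent_iff_seqCongruentFrom_zero.mpr (seqCongruentFrom_piFrom hchain)
    · rw [← List.headD_eq_getD, headD_piFrom, zero_mul, zero_add]
  · rintro l₁ ⟨h₁, -⟩ l₂ ⟨h₂, -⟩ heq
    rw [← unPiFrom_piFrom (isPartition_iff.mp h₁).1, ← piMap_eq_piFrom_zero, heq,
      piMap_eq_piFrom_zero, unPiFrom_piFrom (isPartition_iff.mp h₂).1]
  · rintro m ⟨hm, hseq, rfl⟩
    obtain ⟨hchain, hpos⟩ := isPartition_iff.mp hm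
    have hc := seqCongruent_iff_seqCongruentFrom_zero.mp hseq
    have hinv : piFrom 0 (unPiFrom 0 m) = m := piFrom_unPiFrom hchain hc
    refine ⟨unPiFrom 0 m, ⟨isPartition_iff.mpr ⟨isChain_unPiFrom 0 m,
      pos_of_mem_unPiFrom hc hpos⟩, ?_⟩, (piMap_eq_piFrom_zero _).trans hinv⟩
    rw [← List.headD_eq_getD]
    simpa only [headD_piFrom, zero_mul, zero_add] using congrArg (List.headD · 0) hinv
end

section
/- The number of sequentially congruent partitions with largest part equal to n is p(n), the number of partitions of n. -/
/-!
A sequentially congruent partition `λ = (λ_1, …, λ_r)` with largest part `n` corresponds to the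
partition of `n` in which each `j` occurs `(λ_j - λ_{j+1}) / j` times (with `λ_{r+1} = 0`): the
congruences say exactly that these frequencies are integers, and they telescope to `λ_1 = n`.
Conversely `λ_i` is the sum of the parts that are at least `i`, which determines the partition.
-/

def tailSum (μ : Multiset ℕ) (i : ℕ) : ℕ := (μ.filter (i < ·)).sum

theorem tailSum_eq_add (μ : Multiset ℕ) (i : ℕ) :
    tailSum μ i = (i + 1) * μ.count (i + 1) + tailSum μ (i + 1) := by
  have hsplit := Multiset.filter_add_not (· = i + 1) (μ.filter (i < ·))
  rw [Multiset.filter_filter, Multiset.filter_filter] at hsplit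
  have hexact : μ.filter (fun k => k = i + 1 ∧ i < k) = μ.filter (· = i + 1) :=
    Multiset.filter_congr fun k _ => by omega
  have habove : μ.filter (fun k => ¬k = i + 1 ∧ i < k) = μ.filter (i + 1 < ·) :=
    Multiset.filter_congr fun k _ => by omega
  rw [tailSum, tailSum, ← hsplit, hexact, habove, Multiset.filter_eq', Multiset.sum_add,
    Multiset.sum_replicate, smul_eq_mul, mul_comm]

theorem tailSum_eq_zero_iff (μ : Multiset ℕ) (i : ℕ) : tailSum μ i = 0 ↔ μ.sup ≤ i := by
  simp only [tailSum, Multiset.sum_eq_zero_iff, Multiset.mem_filter, Multiset.sup_le, and_imp]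
  exact forall₂_congr fun k _ => by omega

theorem tailSum_zero {μ : Multiset ℕ} (hμ : ∀ k ∈ μ, 0 < k) : tailSum μ 0 = μ.sum := by
  rw [tailSum, Multiset.filter_eq_self.mpr hμ]

theorem eq_of_tailSum_eq {μ ν : Multiset ℕ} (hμ : ∀ k ∈ μ, 0 < k) (hν : ∀ k ∈ ν, 0 < k)
    (h : tailSum μ = tailSum ν) : μ = ν := by
  ext (_ | i)
  · rw [Multiset.count_eq_zero_of_notMem fun h0 => (hμ 0 h0).ne rfl,
      Multiset.count_eq_zero_of_notMem fun h0 => (hν 0 h0).ne rfl]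
  · have := tailSum_eq_add μ i
    rw [h, tailSum_eq_add ν i] at this
    exact Nat.eq_of_mul_eq_mul_left (by omega : 0 < i + 1) (by omega)

def ofParts (μ : Multiset ℕ) : List ℕ := (List.range μ.sup).map (tailSum μ)

theorem getD_ofParts (μ : Multiset ℕ) (i : ℕ) : (ofParts μ).getD i 0 = tailSum μ i := by
  rcases lt_or_ge i μ.sup with hi | hi
  · simp [ofParts, List.getD_eq_getElem?_getD, hi]
  · rw [List.getD_eq_default _ _ (by simpa [ofParts] using hi),
      (tailSum_eq_zero_iff μ i).mpr hi]

theorem isPartition_ofParts (μ : Multiset ℕ) : IsPartition (ofParts μ) := by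
  have hanti : Antitone (tailSum μ) :=
    antitone_nat_of_succ_le fun i => by have := tailSum_eq_add μ i; omega
  refine ⟨?_, ?_⟩
  · rw [List.pairwise_iff_getElem]
    intro i j _ _ hij
    simpa [ofParts] using hanti hij.le
  · simp only [ofParts, List.mem_map, List.mem_range, forall_exists_index, and_imp]
    rintro _ i hi rfl
    exact Nat.pos_of_ne_zero fun h => by have := (tailSum_eq_zero_iff μ i).mp h; omega

theorem seqCongruent_ofParts (μ : Multiset ℕ) : SeqCongruent (ofParts μ) := by
  intro j _
  rw [getD_ofParts, getD_ofParts, tailSum_eq_add μ j]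
  exact (Nat.modEq_iff_dvd' (Nat.le_add_left _ _)).mpr ⟨μ.count (j + 1), by omega⟩ |>.symm

theorem getD_succ_le_getD {l : List ℕ} (hl : l.Pairwise (· ≥ ·)) (j : ℕ) :
    l.getD (j + 1) 0 ≤ l.getD j 0 := by
  rcases lt_or_ge (j + 1) l.length with hj | hj
  · rw [List.getD_eq_getElem _ _ hj, List.getD_eq_getElem _ _ (by omega)]
    exact List.pairwise_iff_getElem.mp hl j (j + 1) _ hj (by omega)
  · rw [List.getD_eq_default _ _ hj]
    exact Nat.zero_le _

theorem SeqCongruent.dvd_getD_sub {l : List ℕ} (hc : SeqCongruent l) (hl : l.Pairwise (· ≥ ·))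
    (j : ℕ) : j + 1 ∣ l.getD j 0 - l.getD (j + 1) 0 := by
  rcases lt_or_ge j l.length with hj | hj
  · exact (Nat.modEq_iff_dvd' (getD_succ_le_getD hl j)).mp (hc j hj).symm
  · rw [List.getD_eq_default _ _ hj, List.getD_eq_default _ _ (Nat.le_succ_of_le hj)]
    exact dvd_zero _

def toParts (l : List ℕ) : Multiset ℕ :=
  ∑ j ∈ Finset.range l.length,
    Multiset.replicate ((l.getD j 0 - l.getD (j + 1) 0) / (j + 1)) (j + 1)

theorem mem_toParts {l : List ℕ} {k : ℕ} (hk : k ∈ toParts l) : 0 < k ∧ k ≤ l.length := by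
  obtain ⟨j, hj, hkj⟩ := Multiset.mem_sum.mp hk
  rw [Multiset.eq_of_mem_replicate hkj]
  exact ⟨j.succ_pos, Finset.mem_range.mp hj⟩

theorem count_toParts {l : List ℕ} {j : ℕ} (hj : j < l.length) :
    (toParts l).count (j + 1) = (l.getD j 0 - l.getD (j + 1) 0) / (j + 1) := by
  rw [toParts, Multiset.count_sum', Finset.sum_eq_single_of_mem j (Finset.mem_range.mpr hj)]
  · exact Multiset.count_replicate_self _ _
  · intro i _ hij
    rw [Multiset.count_replicate, if_neg (by omega)]

theorem tailSum_toParts {l : List ℕ} (hl : l.Pairwise (· ≥ ·)) (hc : SeqCongruent l) (i : ℕ) :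
    tailSum (toParts l) i = l.getD i 0 := by
  induction hk : l.length - i generalizing i with
  | zero =>
    rw [List.getD_eq_default _ _ (by omega), tailSum_eq_zero_iff, Multiset.sup_le]
    exact fun k hk' => by have := (mem_toParts hk').2; omega
  | succ k ih =>
    have hi : i < l.length := by omega
    rw [tailSum_eq_add, count_toParts hi, ih (i + 1) (by omega),
      Nat.mul_div_cancel' (hc.dvd_getD_sub hl i)]
    have := getD_succ_le_getD hl i
    omega

theorem List.eq_of_getD_eq {l₁ l₂ : List ℕ} (h₁ : ∀ x ∈ l₁, 0 < x) (h₂ : ∀ x ∈ l₂, 0 < x)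
    (h : ∀ i, l₁.getD i 0 = l₂.getD i 0) : l₁ = l₂ := by
  refine List.ext_getElem? fun i => ?_
  have hi := h i
  simp only [List.getD_eq_getElem?_getD] at hi
  rcases h₁i : l₁[i]? with _ | a <;> rcases h₂i : l₂[i]? with _ | b <;>
    simp only [h₁i, h₂i, Option.getD_none, Option.getD_some] at hi
  · rfl
  · exact absurd hi (h₂ b (List.mem_of_getElem? h₂i)).ne
  · exact absurd hi (h₁ a (List.mem_of_getElem? h₁i)).ne'
  · rw [hi]

theorem ofParts_toParts {l : List ℕ} (hl : IsPartition l) (hc : SeqCongruent l) :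
    ofParts (toParts l) = l :=
  List.eq_of_getD_eq (isPartition_ofParts _).2 hl.2 fun i => by
    rw [getD_ofParts, tailSum_toParts hl.1 hc]

theorem ofParts_injective (n : ℕ) :
    Function.Injective fun μ : n.Partition => ofParts μ.parts := fun μ ν h =>
  Nat.Partition.ext <| eq_of_tailSum_eq (fun _ => μ.parts_pos) (fun _ => ν.parts_pos) <|
    funext fun i => by simpa only [getD_ofParts] using congrArg (·.getD i 0) h

theorem setOf_seqCongruent_getD_zero_eq_range (n : ℕ) :
    {l : List ℕ | IsPartition l ∧ SeqCongruent l ∧ l.getD 0 0 = n}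
      = Set.range fun μ : n.Partition => ofParts μ.parts := by
  ext l
  constructor
  · rintro ⟨hl, hc, rfl⟩
    have hpos : ∀ k ∈ toParts l, 0 < k := fun _ hk => (mem_toParts hk).1
    refine ⟨⟨toParts l, fun hk => hpos _ hk, ?_⟩, ofParts_toParts hl hc⟩
    rw [← tailSum_zero hpos, tailSum_toParts hl.1 hc]
  · rintro ⟨μ, rfl⟩
    refine ⟨isPartition_ofParts _, seqCongruent_ofParts _, ?_⟩
    rw [getD_ofParts, tailSum_zero fun _ => μ.parts_pos, μ.parts_sum]

theorem stmt5 (n : ℕ) :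
    {l : List ℕ | IsPartition l ∧ SeqCongruent l ∧ l.getD 0 0 = n}.ncard
      = Fintype.card (Nat.Partition n) := by
  rw [setOf_seqCongruent_getD_zero_eq_range, Set.ncard_range_of_injective (ofParts_injective n),
    Nat.card_eq_fintype_card]
end

section
/- The map σ sending a sequentially congruent partition φ with largest part n to the partition with frequencies m_i = (φ_i − φ_{i+1})/i (where φ_{i+1} = 0 beyond the length of φ) produces a partition of n; that is, Σ_i i·(φ_i − φ_{i+1})/i summed appropriately, namely Σ_i (φ_i − φ_{i+1}) weighted as sizes, yields |σ(φ)| = Σ_i i · m_i = φ₁ = n. -/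
/-!
Each block `j` of `σ(φ)` consists of `(φ_j - φ_{j+1}) / j` copies of `j`, so it contributes
`φ_j - φ_{j+1}` to the size: sequential congruence is exactly what makes the division exact.
The contributions telescope to `φ_1`, because `φ_{r+1} = 0`.
-/

lemma List.antitone_getD_of_pairwise_ge {l : List ℕ} (hl : l.Pairwise (· ≥ ·)) :
    Antitone (l.getD · 0) := by
  refine antitone_nat_of_succ_le fun j => ?_
  by_cases h : j + 1 < l.length
  · rw [List.getD_eq_getElem _ _ h, List.getD_eq_getElem _ _ (Nat.lt_of_succ_lt h)]
    exact List.pairwise_iff_getElem.mp hl j (j + 1) _ h (Nat.lt_succ_self j)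
  · rw [List.getD_eq_default _ _ (not_lt.mp h)]
    exact Nat.zero_le _

lemma List.sum_map_range_tsub_succ {f : ℕ → ℕ} (hf : Antitone f) (n : ℕ) :
    ((List.range n).map fun j => f j - f (j + 1)).sum = f 0 - f n := by
  induction n with
  | zero => simp
  | succ n ih =>
    rw [List.range_succ, List.map_append, List.sum_append, ih]
    have : f n ≤ f 0 := hf n.zero_le
    have : f (n + 1) ≤ f n := hf n.le_succ
    simp only [List.map_cons, List.map_nil, List.sum_cons, List.sum_nil, add_zero]
    omega

lemma isPartition_sigmaMap (l : List ℕ) : IsPartition (sigmaMap l) := by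
  refine ⟨List.pairwise_flatMap.mpr ⟨fun _ _ => List.pairwise_replicate.mpr (Or.inr le_rfl), ?_⟩, ?_⟩
  · rw [List.pairwise_reverse]
    refine List.pairwise_lt_range.imp fun hab x hx y hy => ?_
    rw [List.eq_of_mem_replicate hx, List.eq_of_mem_replicate hy]
    omega
  · intro x hx
    obtain ⟨j, -, hx⟩ := List.mem_flatMap.mp hx
    rw [List.eq_of_mem_replicate hx]
    exact Nat.succ_pos j

lemma sum_sigmaMap (l : List ℕ) :
    (sigmaMap l).sum = ((List.range l.length).map
      fun j => (l.getD j 0 - l.getD (j + 1) 0) / (j + 1) * (j + 1)).sum := by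
  simp only [sigmaMap, List.flatMap_def, List.sum_flatten, List.map_map, List.map_reverse,
    List.sum_reverse, Function.comp_def, List.sum_replicate, smul_eq_mul]

theorem stmt7 (l : List ℕ) (hl : IsPartition l) (hsc : SeqCongruent l) :
    IsPartition (sigmaMap l) ∧ (sigmaMap l).sum = l.getD 0 0 := by
  have hanti := List.antitone_getD_of_pairwise_ge hl.1
  have hblock : ∀ j ∈ List.range l.length,
      (l.getD j 0 - l.getD (j + 1) 0) / (j + 1) * (j + 1) = l.getD j 0 - l.getD (j + 1) 0 :=
    fun j hj => Nat.div_mul_cancel <|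
      (Nat.modEq_iff_dvd' (hanti j.le_succ)).mp (hsc j (List.mem_range.mp hj)).symm
  refine ⟨isPartition_sigmaMap l, ?_⟩
  rw [sum_sigmaMap, List.map_congr_left hblock, List.sum_map_range_tsub_succ hanti,
    List.getD_eq_default _ _ le_rfl, Nat.sub_zero]
end

section
/- The conjugate of a sequentially congruent partition is a frequency congruent partition, i.e., a partition in which each part i occurs with frequency divisible by i; conversely, the conjugate of a frequency congruent partition is sequentially congruent. -/
/-!
For a weakly decreasing list `λ`, the multiplicity of `i` in the conjugate `λ'` is `λ_i - λ_{i+1}`,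
and dually `λ'_i - λ'_{i+1}` is the multiplicity of `i` in `λ`: both follow from
`#{parts ≥ i} = #{parts = i} + #{parts ≥ i + 1}` together with `(λ')' = λ` read off entrywise.
Sequential congruence of `λ` says exactly that `i ∣ λ_i - λ_{i+1}`, and frequency congruence of `λ`
that `i ∣ λ'_i - λ'_{i+1}`.
-/

namespace List

theorem countP_le_eq_count_add_countP_succ_le (l : List ℕ) (k : ℕ) :
    l.countP (k ≤ ·) = l.count k + l.countP (k + 1 ≤ ·) := by
  induction l with
  | nil => rfl
  | cons a t ih =>
    simp only [countP_cons, count_cons, ih, beq_iff_eq, decide_eq_true_eq]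
    grind

theorem countP_range_lt (N t : ℕ) : (range N).countP (· < t) = min t N := by
  induction N with
  | zero => simp
  | succ n ih =>
    rw [range_succ, countP_append, ih, countP_singleton]
    grind

theorem getD_le_of_forall_le {l : List ℕ} {a : ℕ} (h : ∀ x ∈ l, x ≤ a) (m : ℕ) :
    l.getD m 0 ≤ a := by
  rw [getD_eq_getElem?_getD]
  cases hm : l[m]? with
  | none => exact Nat.zero_le a
  | some x => exact h x (mem_of_getElem? hm)

theorem lt_countP_le_iff {l : List ℕ} (hl : l.Pairwise (· ≥ ·)) {k : ℕ} (hk : 0 < k) (m : ℕ) :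
    m < l.countP (k ≤ ·) ↔ k ≤ l.getD m 0 := by
  induction l generalizing m with
  | nil => simp only [countP_nil, getD_nil]; omega
  | cons a t ih =>
    obtain ⟨ha, ht⟩ := pairwise_cons.1 hl
    by_cases hka : k ≤ a
    · cases m with
      | zero => simp [hka]
      | succ m => simp [hka, ih ht]
    · have hle : ∀ x ∈ a :: t, x ≤ a := by simpa using ha
      have h0 : (a :: t).countP (k ≤ ·) = 0 :=
        countP_eq_zero.2 fun x hx => by have := hle x hx; simp only [decide_eq_true_eq]; omega
      have := getD_le_of_forall_le hle m
      omega

theorem getD_antitone {l : List ℕ} (hl : l.Pairwise (· ≥ ·)) {i j : ℕ} (hij : i ≤ j) :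
    l.getD j 0 ≤ l.getD i 0 := by
  rcases Nat.eq_zero_or_pos (l.getD j 0) with h | h
  · omega
  · exact (lt_countP_le_iff hl h i).1 <| hij.trans_lt <| (lt_countP_le_iff hl h j).2 le_rfl

end List

section Conjugate

open List

variable {l : List ℕ}

theorem getD_conj (hl : l.Pairwise (· ≥ ·)) (i : ℕ) :
    (conj l).getD i 0 = l.countP (i + 1 ≤ ·) := by
  by_cases hi : i < l.getD 0 0
  · rw [conj, getD_eq_getElem _ _ (by simpa using hi)]
    simp
  · have := lt_countP_le_iff hl (k := i + 1) i.succ_pos 0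
    rw [getD_eq_default _ _ (by simpa [conj] using hi)]
    omega

theorem countP_conj (hl : l.Pairwise (· ≥ ·)) (m : ℕ) :
    (conj l).countP (m + 1 ≤ ·) = l.getD m 0 := by
  have hmem : ∀ i, m + 1 ≤ l.countP (i + 1 ≤ ·) ↔ i < l.getD m 0 :=
    fun i => lt_countP_le_iff hl i.succ_pos m
  simp only [conj, countP_map, Function.comp_def, hmem, countP_range_lt]
  exact min_eq_left (getD_antitone hl m.zero_le)

theorem count_conj_add_getD (hl : l.Pairwise (· ≥ ·)) (j : ℕ) :
    (conj l).count (j + 1) + l.getD (j + 1) 0 = l.getD j 0 := by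
  rw [← countP_conj hl j, ← countP_conj hl (j + 1),
    countP_le_eq_count_add_countP_succ_le (conj l) (j + 1)]

theorem getD_conj_eq_count_add (hl : l.Pairwise (· ≥ ·)) (j : ℕ) :
    (conj l).getD j 0 = l.count (j + 1) + (conj l).getD (j + 1) 0 := by
  rw [getD_conj hl, getD_conj hl, countP_le_eq_count_add_countP_succ_le]

end Conjugate

theorem SeqCongruent.modEq {l : List ℕ} (h : SeqCongruent l) (j : ℕ) :
    l.getD j 0 ≡ l.getD (j + 1) 0 [MOD j + 1] := by
  by_cases hj : j < l.length
  · exact h j hj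
  · rw [List.getD_eq_default _ _ (by omega), List.getD_eq_default _ _ (by omega)]

theorem stmt11 (l : List ℕ) (hl : IsPartition l) :
    (SeqCongruent l → FreqCongruent (conj l)) ∧
      (FreqCongruent l → SeqCongruent (conj l)) := by
  refine ⟨fun hseq i hi => ?_, fun hfreq j _ => ?_⟩
  · obtain ⟨j, rfl⟩ := Nat.exists_eq_add_one.2 hi
    have h : (conj l).count (j + 1) + l.getD (j + 1) 0 ≡ 0 + l.getD (j + 1) 0 [MOD j + 1] := by
      rw [zero_add, count_conj_add_getD hl.1]
      exact hseq.modEq j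
    exact Nat.modEq_zero_iff_dvd.1 (Nat.ModEq.add_right_cancel' _ h)
  · rw [getD_conj_eq_count_add hl.1]
    simpa using (Nat.modEq_zero_iff_dvd.2 (hfreq (j + 1) j.succ_pos)).add_right
      ((conj l).getD (j + 1) 0)
end

section
/- The number of frequency congruent partitions of length n (partitions in which each part i occurs a multiple of i times, with n total parts) equals p(n), the number of partitions of n. -/
namespace Multiset

def selfReplicate (s : Multiset ℕ) : Multiset ℕ :=
  s.bind fun i => replicate i i

@[simp]
theorem count_selfReplicate (s : Multiset ℕ) (i : ℕ) :
    count i s.selfReplicate = i * count i s := by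
  induction s using Multiset.induction with
  | empty => simp [selfReplicate]
  | cons a s ih =>
    rw [selfReplicate, cons_bind, count_add, ← selfReplicate, ih, count_replicate, count_cons]
    split_ifs <;> grind

@[simp]
theorem card_selfReplicate (s : Multiset ℕ) : card s.selfReplicate = s.sum := by
  simp [selfReplicate]

theorem mem_selfReplicate {s : Multiset ℕ} {i : ℕ} :
    i ∈ s.selfReplicate ↔ i ∈ s ∧ 0 < i := by
  simp only [selfReplicate, mem_bind, mem_replicate]
  grind

theorem selfReplicate_injOn : Set.InjOn selfReplicate {s | 0 ∉ s} := by
  intro s hs t ht h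
  ext i
  rcases Nat.eq_zero_or_pos i with rfl | hi
  · rw [count_eq_zero.2 hs, count_eq_zero.2 ht]
  · exact Nat.eq_of_mul_eq_mul_left hi (by simpa using congr(count i $h))

-- Since `count 0 s / 0 = 0`, the result never contains `0`.
def selfReplicateInv (s : Multiset ℕ) : Multiset ℕ :=
  s.dedup.bind fun i => replicate (count i s / i) i

theorem count_selfReplicateInv (s : Multiset ℕ) (i : ℕ) :
    count i s.selfReplicateInv = count i s / i := by
  rw [selfReplicateInv, count_bind]
  change ∑ j ∈ s.toFinset, count i (replicate (count j s / j) j) = _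
  simp only [count_replicate, Finset.sum_ite_eq', mem_toFinset]
  split_ifs with h
  · rfl
  · simp [count_eq_zero.2 h]

theorem pos_of_mem_selfReplicateInv {s : Multiset ℕ} {i : ℕ} (hi : i ∈ s.selfReplicateInv) :
    0 < i := by
  rw [← count_pos, count_selfReplicateInv] at hi
  exact Nat.pos_of_ne_zero fun h => by simp [h] at hi

theorem selfReplicate_selfReplicateInv {s : Multiset ℕ} (hs : 0 ∉ s)
    (hdvd : ∀ i, 0 < i → i ∣ count i s) : s.selfReplicateInv.selfReplicate = s := by
  ext i
  rw [count_selfReplicate, count_selfReplicateInv]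
  rcases Nat.eq_zero_or_pos i with rfl | hi
  · simp [count_eq_zero.2 hs]
  · exact Nat.mul_div_cancel' (hdvd i hi)

end Multiset

namespace Nat.Partition

open Multiset

variable {n : ℕ}

theorem zero_notMem_parts (p : n.Partition) : 0 ∉ p.parts :=
  fun h => lt_irrefl 0 (p.parts_pos h)

def toFreqCongruent (p : n.Partition) : List ℕ :=
  p.parts.selfReplicate.sort (· ≥ ·)

theorem coe_toFreqCongruent (p : n.Partition) :
    (p.toFreqCongruent : Multiset ℕ) = p.parts.selfReplicate :=
  sort_eq _ _

theorem toFreqCongruent_injective : Function.Injective (toFreqCongruent (n := n)) :=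
  fun p q h => Nat.Partition.ext <|
    selfReplicate_injOn p.zero_notMem_parts q.zero_notMem_parts <| by
      rw [← coe_toFreqCongruent, h, coe_toFreqCongruent]

theorem isPartition_toFreqCongruent (p : n.Partition) : IsPartition p.toFreqCongruent := by
  refine ⟨pairwise_sort _ _, fun i hi => ?_⟩
  rw [← mem_coe, coe_toFreqCongruent] at hi
  exact (mem_selfReplicate.1 hi).2

theorem freqCongruent_toFreqCongruent (p : n.Partition) : FreqCongruent p.toFreqCongruent :=
  fun i _ => ⟨p.parts.count i, by rw [← coe_count, coe_toFreqCongruent, count_selfReplicate]⟩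

theorem length_toFreqCongruent (p : n.Partition) : p.toFreqCongruent.length = n := by
  rw [← coe_card, coe_toFreqCongruent, card_selfReplicate, p.parts_sum]

theorem range_toFreqCongruent :
    Set.range (toFreqCongruent (n := n)) =
      {l : List ℕ | IsPartition l ∧ FreqCongruent l ∧ l.length = n} := by
  ext l
  constructor
  · rintro ⟨p, rfl⟩
    exact ⟨p.isPartition_toFreqCongruent, p.freqCongruent_toFreqCongruent,
      p.length_toFreqCongruent⟩
  · rintro ⟨⟨hsorted, hpos⟩, hfreq, rfl⟩
    have hl : (l : Multiset ℕ).selfReplicateInv.selfReplicate = l :=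
      selfReplicate_selfReplicateInv (fun h => lt_irrefl 0 (hpos 0 h))
        (fun i hi => by simpa using hfreq i hi)
    refine ⟨⟨(l : Multiset ℕ).selfReplicateInv, pos_of_mem_selfReplicateInv, ?_⟩, ?_⟩
    · rw [← card_selfReplicate, hl, coe_card]
    · change sort _ _ = l
      rw [hl, coe_sort, List.mergeSort_eq_self]
      exact hsorted

end Nat.Partition

theorem stmt12 (n : ℕ) :
    {l : List ℕ | IsPartition l ∧ FreqCongruent l ∧ l.length = n}.ncard
      = Fintype.card (Nat.Partition n) := by
  rw [← Nat.Partition.range_toFreqCongruent,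
    Set.ncard_range_of_injective Nat.Partition.toFreqCongruent_injective, Nat.card_eq_fintype_card]
end

section
/- The map sending a partition λ = (1^{m₁} 2^{m₂} 3^{m₃} ...) of n to the partition (1^{1·m₁} 2^{2·m₂} 3^{3·m₃} ...) is a bijection from partitions of n onto frequency congruent partitions of length n. -/
/-- The map sending `(1^{m₁} 2^{m₂} ...)` to `(1^{1·m₁} 2^{2·m₂} ...)`: each occurrence of a
part `i` is replaced by `i` copies of `i`, so the multiplicity of `i` is multiplied by `i`. -/
def stretch (l : List ℕ) : List ℕ :=
  l.flatMap (fun i => List.replicate i i)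

/-! Stretching multiplies the multiplicity of each part `i` by `i`, and the multiplicities
determine a partition, so stretching is injective. A frequency congruent partition is hit by
the partition in which each part `i` has multiplicity `mᵢ / i`; sizes match because stretching
turns the size of a partition into the length of its image. -/

namespace List

theorem Pairwise.flatMap_replicate {α : Type*} {r : α → α → Prop} [Std.Refl r] {l : List α}
    (f : α → ℕ) (h : l.Pairwise r) : (l.flatMap fun a => replicate (f a) a).Pairwise r := by
  refine pairwise_flatMap.2 ⟨fun a _ => pairwise_replicate.2 (Or.inr (refl a)), ?_⟩
  refine h.imp fun {a b} hab x hx y hy => ?_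
  rw [eq_of_mem_replicate hx, eq_of_mem_replicate hy]
  exact hab

theorem count_flatMap_replicate {α : Type*} [BEq α] [LawfulBEq α] (l : List α) (f : α → ℕ)
    (x : α) : (l.flatMap fun a => replicate (f a) a).count x = l.count x * f x := by
  induction l with
  | nil => simp
  | cons a t ih =>
    rw [flatMap_cons, count_append, ih, count_replicate, count_cons]
    by_cases hax : a = x
    · subst hax; simp [Nat.add_mul, Nat.add_comm]
    · simp [hax]

end List

theorem IsPartition.eq_of_count_eq {a b : List ℕ} (ha : IsPartition a) (hb : IsPartition b)
    (h : ∀ i, 0 < i → a.count i = b.count i) : a = b := by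
  refine List.Perm.eq_of_pairwise' ha.1 hb.1 (List.perm_iff_count.2 fun i => ?_)
  rcases Nat.eq_zero_or_pos i with rfl | hi
  · rw [List.count_eq_zero.2 fun h0 => (ha.2 0 h0).false,
      List.count_eq_zero.2 fun h0 => (hb.2 0 h0).false]
  · exact h i hi

theorem count_stretch (l : List ℕ) (i : ℕ) : (stretch l).count i = l.count i * i :=
  l.count_flatMap_replicate id i

theorem length_stretch (l : List ℕ) : (stretch l).length = l.sum := by
  simp [stretch, List.length_flatMap]

theorem IsPartition.stretch {l : List ℕ} (hl : IsPartition l) : IsPartition (stretch l) := by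
  refine ⟨hl.1.flatMap_replicate id, fun x hx => ?_⟩
  obtain ⟨i, hi, hx⟩ := List.mem_flatMap.1 hx
  exact List.eq_of_mem_replicate hx ▸ hl.2 i hi

theorem freqCongruent_stretch (l : List ℕ) : FreqCongruent (stretch l) :=
  fun i _ => ⟨l.count i, by rw [count_stretch, Nat.mul_comm]⟩

theorem stretch_injOn : Set.InjOn stretch {l | IsPartition l} := by
  intro a ha b hb h
  refine ha.eq_of_count_eq hb fun i hi => Nat.eq_of_mul_eq_mul_right hi ?_
  rw [← count_stretch, ← count_stretch, h]

def unstretch (l : List ℕ) : List ℕ :=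
  l.dedup.flatMap fun i => List.replicate (l.count i / i) i

theorem count_unstretch (l : List ℕ) (i : ℕ) : (unstretch l).count i = l.count i / i := by
  rw [unstretch, List.count_flatMap_replicate, List.count_dedup]
  split_ifs with hi
  · exact Nat.one_mul _
  · rw [List.count_eq_zero.2 hi, Nat.zero_div, Nat.zero_mul]

theorem IsPartition.unstretch {l : List ℕ} (hl : IsPartition l) : IsPartition (unstretch l) := by
  refine ⟨(hl.1.sublist l.dedup_sublist).flatMap_replicate _, fun x hx => ?_⟩
  obtain ⟨i, -, hx⟩ := List.mem_flatMap.1 hx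
  obtain ⟨hpos, rfl⟩ := List.mem_replicate.1 hx
  exact Nat.pos_of_ne_zero fun h0 => by simp [h0] at hpos

theorem stretch_unstretch {l : List ℕ} (hl : IsPartition l) (hf : FreqCongruent l) :
    stretch (unstretch l) = l := by
  refine hl.unstretch.stretch.eq_of_count_eq hl fun i hi => ?_
  rw [count_stretch, count_unstretch, Nat.div_mul_cancel (hf i hi)]

theorem stmt13 (n : ℕ) :
    Set.BijOn stretch {l : List ℕ | IsPartition l ∧ l.sum = n}
      {l : List ℕ | IsPartition l ∧ FreqCongruent l ∧ l.length = n} := by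
  refine ⟨fun l ⟨hl, hsum⟩ => ⟨hl.stretch, freqCongruent_stretch l, hsum ▸ length_stretch l⟩,
    stretch_injOn.mono fun l hl => hl.1, fun l ⟨hl, hf, hlen⟩ => ?_⟩
  refine ⟨unstretch l, ⟨hl.unstretch, ?_⟩, stretch_unstretch hl hf⟩
  rw [← length_stretch, stretch_unstretch hl hf, hlen]
end

section
/- Let A = (a₁, a₂, ...) be a sequence of distinct positive integers and B = {b₁, b₂, ...} ⊆ ℕ a set of positive integers. The map sending a partition with parts from A written (a₁^{n₁} a₂^{n₂} ...) to the partition (b₁^{a₁n₁} b₂^{a₂n₂} ...) is a bijection from partitions of n into parts from A onto partitions of length n with parts from B in which the multiplicity of b_i is divisible by a_i for each i. Consequently #𝒫_B(A, n) = p_A(n). -/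
open Classical in
/-- Replace one occurrence of the part `a i` by `a i` copies of `b i`. -/
noncomputable def relabel (a b : ℕ → ℕ) (x : ℕ) : Multiset ℕ :=
  if h : ∃ i, a i = x then Multiset.replicate (a h.choose) (b h.choose) else 0

/-- The map sending `(a₁^{n₁} a₂^{n₂} ...)` to `(b₁^{a₁n₁} b₂^{a₂n₂} ...)`. -/
noncomputable def relabelMap (a b : ℕ → ℕ) (μ : Multiset ℕ) : Multiset ℕ :=
  μ.bind (relabel a b)

namespace Multiset

theorem eq_of_count_eq_on_range {α ι : Type*} [DecidableEq α] {f : ι → α} {μ ν : Multiset α}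
    (hμ : ∀ x ∈ μ, ∃ i, x = f i) (hν : ∀ x ∈ ν, ∃ i, x = f i)
    (h : ∀ i, μ.count (f i) = ν.count (f i)) : μ = ν := by
  ext x
  by_cases hx : ∃ i, x = f i
  · obtain ⟨i, rfl⟩ := hx
    exact h i
  · rw [count_eq_zero_of_notMem fun hx' => hx (hμ x hx'),
      count_eq_zero_of_notMem fun hx' => hx (hν x hx')]

end Multiset

section relabel

open Function

variable {a b : ℕ → ℕ}

theorem relabel_apply (ha : Injective a) (i : ℕ) :
    relabel a b (a i) = Multiset.replicate (a i) (b i) := by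
  have h : ∃ j, a j = a i := ⟨i, rfl⟩
  rw [relabel, dif_pos h, ha h.choose_spec]

theorem relabel_of_notMem_range {x : ℕ} (hx : x ∉ Set.range a) : relabel a b x = 0 :=
  dif_neg hx

theorem count_relabel (ha : Injective a) (hb : Injective b) (x i : ℕ) :
    (relabel a b x).count (b i) = if x = a i then a i else 0 := by
  by_cases hx : x ∈ Set.range a
  · obtain ⟨j, rfl⟩ := hx
    rw [relabel_apply ha, Multiset.count_replicate]
    simp only [hb.eq_iff, ha.eq_iff, eq_comm]
    split_ifs with hji <;> simp [hji]
  · rw [relabel_of_notMem_range hx, Multiset.count_zero, if_neg fun h => hx ⟨i, h.symm⟩]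

theorem count_relabelMap (ha : Injective a) (hb : Injective b)
    (μ : Multiset ℕ) (i : ℕ) :
    (relabelMap a b μ).count (b i) = a i * μ.count (a i) := by
  rw [relabelMap, Multiset.count_bind, Multiset.sum_map_eq_nsmul_single (a i), count_relabel ha hb,
    if_pos rfl, smul_eq_mul, mul_comm]
  intro x hx _
  rw [count_relabel ha hb, if_neg hx]

theorem card_relabelMap (ha : Injective a) {μ : Multiset ℕ}
    (hμ : ∀ x ∈ μ, ∃ i, x = a i) : (relabelMap a b μ).card = μ.sum := by
  rw [relabelMap, Multiset.card_bind, ← Multiset.map_id' μ, Multiset.map_map]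
  congr 1
  refine Multiset.map_congr rfl fun x hx => ?_
  obtain ⟨i, rfl⟩ := hμ x hx
  simp [relabel_apply ha]

theorem exists_eq_of_mem_relabelMap {μ : Multiset ℕ} {x : ℕ}
    (hx : x ∈ relabelMap a b μ) : ∃ i, x = b i := by
  obtain ⟨y, -, hy⟩ := Multiset.mem_bind.mp hx
  rw [relabel] at hy
  split at hy
  · exact ⟨_, Multiset.eq_of_mem_replicate hy⟩
  · simp at hy

-- For a part `x = b i` of `ν`, `invFun b x = i`.
noncomputable def unrelabelMap (a b : ℕ → ℕ) (ν : Multiset ℕ) : Multiset ℕ :=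
  ∑ x ∈ ν.toFinset, Multiset.replicate (ν.count x / a (invFun b x)) (a (invFun b x))

theorem exists_eq_of_mem_unrelabelMap {ν : Multiset ℕ} {x : ℕ}
    (hx : x ∈ unrelabelMap a b ν) : ∃ i, x = a i := by
  obtain ⟨y, -, hy⟩ := Multiset.mem_sum.mp hx
  exact ⟨_, Multiset.eq_of_mem_replicate hy⟩

theorem count_unrelabelMap (ha : Injective a) (hb : Injective b) {ν : Multiset ℕ}
    (hν : ∀ x ∈ ν, ∃ i, x = b i) (i : ℕ) :
    (unrelabelMap a b ν).count (a i) = ν.count (b i) / a i := by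
  rw [unrelabelMap, Multiset.count_sum', Finset.sum_eq_single (b i), leftInverse_invFun hb i,
    Multiset.count_replicate_self]
  · intro x hx hxi
    obtain ⟨j, rfl⟩ := hν x (Multiset.mem_toFinset.mp hx)
    rw [leftInverse_invFun hb j, Multiset.count_replicate, if_neg (ha.ne (hxi ∘ congrArg b))]
  · intro hi
    rw [Multiset.count_eq_zero_of_notMem (hi ∘ Multiset.mem_toFinset.mpr), Nat.zero_div,
      Multiset.replicate_zero, Multiset.count_zero]

theorem sum_unrelabelMap (hb : Injective b) {ν : Multiset ℕ} (hν : ∀ x ∈ ν, ∃ i, x = b i)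
    (hdvd : ∀ i, a i ∣ ν.count (b i)) : (unrelabelMap a b ν).sum = ν.card := by
  rw [unrelabelMap, Multiset.sum_sum, ← Multiset.toFinset_sum_count_eq]
  refine Finset.sum_congr rfl fun x hx => ?_
  obtain ⟨j, rfl⟩ := hν x (Multiset.mem_toFinset.mp hx)
  rw [Multiset.sum_replicate, leftInverse_invFun hb j, smul_eq_mul, Nat.div_mul_cancel (hdvd j)]

theorem relabelMap_injOn (ha : Injective a) (hapos : ∀ i, 0 < a i) (hb : Injective b) :
    Set.InjOn (relabelMap a b) {μ | ∀ x ∈ μ, ∃ i, x = a i} := fun μ hμ μ' hμ' h =>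
  Multiset.eq_of_count_eq_on_range hμ hμ' fun i => Nat.eq_of_mul_eq_mul_left (hapos i) <| by
    rw [← count_relabelMap ha hb, ← count_relabelMap ha hb, h]

theorem relabelMap_unrelabelMap (ha : Injective a) (hb : Injective b) {ν : Multiset ℕ}
    (hν : ∀ x ∈ ν, ∃ i, x = b i) (hdvd : ∀ i, a i ∣ ν.count (b i)) :
    relabelMap a b (unrelabelMap a b ν) = ν :=
  Multiset.eq_of_count_eq_on_range (fun _ => exists_eq_of_mem_relabelMap) hν fun i => by
    rw [count_relabelMap ha hb, count_unrelabelMap ha hb hν, Nat.mul_div_cancel' (hdvd i)]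

theorem relabelMap_bijOn (ha : Injective a) (hapos : ∀ i, 0 < a i) (hb : Injective b) (n : ℕ) :
    Set.BijOn (relabelMap a b)
      {μ : Multiset ℕ | (∀ x ∈ μ, ∃ i, x = a i) ∧ μ.sum = n}
      {μ : Multiset ℕ | (∀ x ∈ μ, ∃ i, x = b i) ∧ (∀ i, a i ∣ μ.count (b i)) ∧ μ.card = n} := by
  refine ⟨?mapsTo, (relabelMap_injOn ha hapos hb).mono fun _ => And.left, ?surjOn⟩
  case mapsTo =>
    rintro μ ⟨hμ, rfl⟩
    exact ⟨fun _ => exists_eq_of_mem_relabelMap, fun i => ⟨_, count_relabelMap ha hb μ i⟩,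
      card_relabelMap ha hμ⟩
  case surjOn =>
    rintro ν ⟨hν, hdvd, rfl⟩
    exact ⟨unrelabelMap a b ν, ⟨fun _ => exists_eq_of_mem_unrelabelMap,
      sum_unrelabelMap hb hν hdvd⟩, relabelMap_unrelabelMap ha hb hν hdvd⟩

end relabel

theorem stmt14_general (a b : ℕ → ℕ) (ha : Function.Injective a) (hapos : ∀ i, 0 < a i)
    (hb : Function.Injective b) (n : ℕ) :
    Set.BijOn (relabelMap a b)
      {μ : Multiset ℕ | (∀ x ∈ μ, ∃ i, x = a i) ∧ μ.sum = n}
      {μ : Multiset ℕ | (∀ x ∈ μ, ∃ i, x = b i) ∧ (∀ i, a i ∣ μ.count (b i)) ∧ μ.card = n} ∧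
    {μ : Multiset ℕ | (∀ x ∈ μ, ∃ i, x = b i) ∧ (∀ i, a i ∣ μ.count (b i)) ∧ μ.card = n}.ncard
      = {μ : Multiset ℕ | (∀ x ∈ μ, ∃ i, x = a i) ∧ μ.sum = n}.ncard := by
  have h := relabelMap_bijOn ha hapos hb n
  exact ⟨h, h.ncard_eq.symm⟩

theorem stmt14 (a b : ℕ → ℕ) (ha : Function.Injective a) (hapos : ∀ i, 0 < a i)
    (hb : Function.Injective b) (hbpos : ∀ i, 0 < b i) (n : ℕ) :
    Set.BijOn (relabelMap a b)
      {μ : Multiset ℕ | (∀ x ∈ μ, ∃ i, x = a i) ∧ μ.sum = n}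
      {μ : Multiset ℕ | (∀ x ∈ μ, ∃ i, x = b i) ∧ (∀ i, a i ∣ μ.count (b i)) ∧ μ.card = n} ∧
    {μ : Multiset ℕ | (∀ x ∈ μ, ∃ i, x = b i) ∧ (∀ i, a i ∣ μ.count (b i)) ∧ μ.card = n}.ncard
      = {μ : Multiset ℕ | (∀ x ∈ μ, ∃ i, x = a i) ∧ μ.sum = n}.ncard :=
  stmt14_general a b ha hapos hb n
end

section
/- For a sequence A = (a₁, a₂, a₃, ...) of positive integers, the conjugates of partitions λ satisfying 'a_i divides the multiplicity of i in λ for all i' are exactly the partitions μ = (μ₁ ≥ μ₂ ≥ ...) satisfying μ_i ≡ μ_{i+1} (mod a_i) for all i (where μ_j = 0 beyond the length). -/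
/-!
The multiplicity of `i` in a partition `λ` is `μ_i - μ_{i+1}`, where `μ` is the conjugate of `λ`
(`μ_i` counts the parts `≥ i`). Since `μ_{i+1} ≤ μ_i`, the condition `a_i ∣ mult_i(λ)` is exactly
`μ_i ≡ μ_{i+1} [MOD a_i]`, and conjugation is an involution on partitions.
-/

namespace List

lemma antitone_getD {l : List ℕ} (hl : l.Pairwise (· ≥ ·)) : Antitone (l.getD · 0) := by
  intro j k hjk
  by_cases hk : k < l.length
  · simp only [getD_eq_getElem _ _ hk, getD_eq_getElem _ _ (hjk.trans_lt hk)]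
    exact hl.rel_get_of_le hjk
  · simp only [getD_eq_default _ _ (not_lt.mp hk)]
    exact Nat.zero_le _

lemma le_getD_zero_of_mem {l : List ℕ} (hl : l.Pairwise (· ≥ ·)) {y : ℕ} (hy : y ∈ l) :
    y ≤ l.getD 0 0 := by
  obtain ⟨n, hn, rfl⟩ := getElem_of_mem hy
  rw [← getD_eq_getElem _ 0 hn]
  exact antitone_getD hl n.zero_le

lemma countP_succ_le_eq_add_count (l : List ℕ) (j : ℕ) :
    l.countP (j + 1 ≤ ·) = l.countP (j + 1 + 1 ≤ ·) + l.count (j + 1) := by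
  induction l with
  | nil => rfl
  | cons x xs ih =>
    simp only [countP_cons, count_cons, ih, beq_iff_eq, decide_eq_true_eq]
    split_ifs <;> omega

lemma succ_le_countP_iff {l : List ℕ} (hl : l.Pairwise (· ≥ ·)) {k : ℕ} (hk : 0 < k) (j : ℕ) :
    j + 1 ≤ l.countP (k ≤ ·) ↔ k ≤ l.getD j 0 := by
  induction l generalizing j with
  | nil => simp; omega
  | cons x xs ih =>
    by_cases hx : k ≤ x
    · cases j with
      | zero => simp [hx]
      | succ j => simpa [hx] using ih hl.of_cons j
    · have hnone : (x :: xs).countP (k ≤ ·) = 0 := countP_eq_zero.mpr fun y hy => by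
        have := le_getD_zero_of_mem hl hy
        simp only [getD_cons_zero, decide_eq_true_eq] at this ⊢
        omega
      have hj : (x :: xs).getD j 0 ≤ x := antitone_getD hl j.zero_le
      simp only [hnone]
      omega

end List

open List

lemma conj_length (l : List ℕ) : (conj l).length = l.getD 0 0 := by
  simp [conj]

lemma conj_getD {l : List ℕ} (hl : l.Pairwise (· ≥ ·)) (j : ℕ) :
    (conj l).getD j 0 = l.countP (j + 1 ≤ ·) := by
  by_cases hj : j < l.getD 0 0
  · rw [getD_eq_getElem _ _ (by simpa [conj_length] using hj)]
    simp [conj]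
  · rw [getD_eq_default _ _ (by simpa [conj_length] using hj), eq_comm, countP_eq_zero]
    intro y hy
    have := le_getD_zero_of_mem hl hy
    simp only [decide_eq_true_eq]
    omega

lemma isPartition_conj (l : List ℕ) : IsPartition (conj l) := by
  refine ⟨?_, ?_⟩
  · refine pairwise_map.mpr (pairwise_lt_range.imp fun hij => countP_mono_left fun x _ hx => ?_)
    simp only [decide_eq_true_eq] at hx ⊢
    omega
  · simp only [conj, mem_map, mem_range, forall_exists_index, and_imp]
    rintro _ i hi rfl
    cases l with
    | nil => simp at hi
    | cons y ys => exact countP_pos_iff.mpr ⟨y, mem_cons_self, by simpa using hi⟩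

lemma countP_range_lt {t M : ℕ} (h : t ≤ M) : (List.range M).countP (· < t) = t := by
  obtain ⟨d, rfl⟩ := Nat.exists_eq_add_of_le h
  change Nat.count (· < t) (t + d) = t
  rw [Nat.count_add, Nat.count_of_forall (fun _ h => h), Nat.count_of_forall_not (by omega),
    add_zero]

lemma conj_conj {l : List ℕ} (hl : IsPartition l) : conj (conj l) = l := by
  have hgetD (j : ℕ) : (conj (conj l)).getD j 0 = l.getD j 0 := by
    rw [conj_getD (isPartition_conj l).1, conj, countP_map]
    calc (List.range (l.getD 0 0)).countP _
        = (List.range (l.getD 0 0)).countP (· < l.getD j 0) :=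
          countP_congr fun i _ => by simpa using succ_le_countP_iff hl.1 i.succ_pos j
      _ = l.getD j 0 := countP_range_lt (antitone_getD hl.1 j.zero_le)
  have hlength : (conj (conj l)).length = l.length := by
    rw [conj_length, conj_getD hl.1, countP_eq_length]
    simpa [Nat.one_le_iff_ne_zero, Nat.pos_iff_ne_zero] using hl.2
  exact ext_getElem hlength fun i h₁ h₂ => by
    rw [← getD_eq_getElem _ 0 h₁, ← getD_eq_getElem _ 0 h₂, hgetD]

lemma count_eq_conj_getD_sub {l : List ℕ} (hl : l.Pairwise (· ≥ ·)) (j : ℕ) :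
    l.count (j + 1) = (conj l).getD j 0 - (conj l).getD (j + 1) 0 := by
  rw [conj_getD hl, conj_getD hl, countP_succ_le_eq_add_count]
  omega

lemma modEq_getD_succ_iff_dvd_sub {l : List ℕ} (hl : l.Pairwise (· ≥ ·)) (n j : ℕ) :
    l.getD j 0 ≡ l.getD (j + 1) 0 [MOD n] ↔ n ∣ l.getD j 0 - l.getD (j + 1) 0 :=
  Nat.ModEq.comm.trans (Nat.modEq_iff_dvd' (antitone_getD hl j.le_succ))

theorem stmt15_general (a : ℕ → ℕ) :
    conj '' {l : List ℕ | IsPartition l ∧ ∀ i, 0 < i → a i ∣ l.count i}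
      = {l : List ℕ | IsPartition l ∧ ∀ j, l.getD j 0 ≡ l.getD (j+1) 0 [MOD a (j+1)]} := by
  ext m
  constructor
  · rintro ⟨l, ⟨hl, hdvd⟩, rfl⟩
    refine ⟨isPartition_conj l, fun j => ?_⟩
    rw [modEq_getD_succ_iff_dvd_sub (isPartition_conj l).1, ← count_eq_conj_getD_sub hl.1]
    exact hdvd (j + 1) j.succ_pos
  · rintro ⟨hm, hcong⟩
    refine ⟨conj m, ⟨isPartition_conj m, fun i hi => ?_⟩, conj_conj hm⟩
    obtain ⟨j, rfl⟩ := Nat.exists_eq_add_one_of_ne_zero hi.ne'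
    rw [count_eq_conj_getD_sub (isPartition_conj m).1, conj_conj hm,
      ← modEq_getD_succ_iff_dvd_sub hm.1]
    exact hcong j

theorem stmt15 (a : ℕ → ℕ) (ha : ∀ i, 0 < a i) :
    conj '' {l : List ℕ | IsPartition l ∧ ∀ i, 0 < i → a i ∣ l.count i}
      = {l : List ℕ | IsPartition l ∧ ∀ j, l.getD j 0 ≡ l.getD (j+1) 0 [MOD a (j+1)]} :=
  stmt15_general a
end

section
/- For |x| < 1 and |q| < 1, the two-variable generating function identity ∏_{n≥1} 1/(1 − xⁿ q^{n²}) = Σ over frequency congruent partitions λ of x^{ℓ(λ)} q^{|λ|} holds, where ℓ(λ) is the number of parts and |λ| the sum of parts. -/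
/-!
Since `(1 - b)⁻¹ = ∑ₖ bᵏ`, expanding the absolutely convergent product `∏ₙ (1 - bₙ)⁻¹` gives the
sum over all finitely supported `f : ℕ →₀ ℕ` of `∏ₙ bₙ ^ f n`: the partial product over a finite
set `s` is the sum over the `f` supported in `s`, and dominated convergence lets `s` grow. For
`bₙ = x ^ (n + 1) * q ^ ((n + 1) ^ 2)` the term of `f` is `x ^ ℓ(λ) * q ^ |λ|`, where `λ` is the
partition in which the part `n + 1` occurs `(n + 1) * f n` times, and `f ↦ λ` is a bijection onto
the frequency congruent partitions.
-/

open Finset Filter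

section ProductOfSeries

variable {𝕜 : Type*} [NormedField 𝕜]

theorem summable_norm_prod_fin {N : ℕ} {g : Fin N → ℕ → 𝕜} (hg : ∀ j, Summable (‖g j ·‖)) :
    Summable fun f : Fin N → ℕ => ‖∏ j, g j (f j)‖ := by
  induction N with
  | zero => exact .of_finite
  | succ N ih =>
    rw [← (Fin.consEquiv fun _ => ℕ).summable_iff]
    simp only [Function.comp_def, Fin.consEquiv_apply, Fin.prod_univ_succ, Fin.cons_zero,
      Fin.cons_succ, norm_mul]
    exact (hg 0).mul_of_nonneg (ih fun j => hg j.succ) (fun _ => norm_nonneg _)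
      (fun _ => norm_nonneg _)

theorem hasSum_prod_fin [CompleteSpace 𝕜] {N : ℕ} {g : Fin N → ℕ → 𝕜}
    (hg : ∀ j, Summable (‖g j ·‖)) :
    HasSum (fun f : Fin N → ℕ => ∏ j, g j (f j)) (∏ j, ∑' k, g j k) := by
  induction N with
  | zero => simp
  | succ N ih =>
    rw [← (Fin.consEquiv fun _ => ℕ).hasSum_iff]
    simp only [Function.comp_def, Fin.consEquiv_apply, Fin.prod_univ_succ, Fin.cons_zero,
      Fin.cons_succ]
    have h0 : HasSum (g 0) (∑' k, g 0 k) := (hg 0).of_norm.hasSum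
    have htail := summable_norm_prod_fin (g := fun j : Fin N => g j.succ) fun j => hg j.succ
    have htail_hasSum := ih (g := fun j : Fin N => g j.succ) fun j => hg j.succ
    have hprod := summable_mul_of_summable_norm (hg 0) htail
    convert h0.mul htail_hasSum hprod using 1

theorem hasSum_prod_fintype [CompleteSpace 𝕜] {ι : Type*} [Fintype ι] {g : ι → ℕ → 𝕜}
    (hg : ∀ i, Summable (‖g i ·‖)) :
    HasSum (fun f : ι → ℕ => ∏ i, g i (f i)) (∏ i, ∑' k, g i k) := by
  let e := Fintype.equivFin ι
  have h := hasSum_prod_fin (g := fun j => g (e.symm j)) fun j => hg _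
  rw [e.symm.prod_comp fun i => ∑' k, g i k] at h
  refine (e.arrowCongr (.refl ℕ)).symm.hasSum_iff.mp ?_
  convert h using 2 with f
  simpa [Function.comp_def] using e.prod_comp fun j => g (e.symm j) (f j)

theorem hasSum_indicator_finsuppProd [CompleteSpace 𝕜] {ι : Type*} (s : Finset ι) {g : ι → ℕ → 𝕜}
    (hg0 : ∀ i, g i 0 = 1) (hg : ∀ i, Summable (‖g i ·‖)) :
    HasSum ({f : ι →₀ ℕ | f.support ⊆ s}.indicator fun f => f.prod g) (∏ i ∈ s, ∑' k, g i k) := by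
  let e : s ↪ ι := Function.Embedding.subtype _
  let φ : (s → ℕ) → ι →₀ ℕ := fun v => Finsupp.embDomain e (Finsupp.equivFunOnFinite.symm v)
  have hφ : Function.Injective φ :=
    (Finsupp.embDomain_injective e).comp Finsupp.equivFunOnFinite.symm.injective
  rw [← Finset.prod_coe_sort s, ← hφ.hasSum_iff]
  · convert hasSum_prod_fintype (fun i : s => hg i) using 2 with v
    have hv : φ v ∈ {f : ι →₀ ℕ | f.support ⊆ s} := by
      intro i hi
      rw [Finsupp.support_embDomain] at hi
      obtain ⟨j, -, rfl⟩ := Finset.mem_map.1 hi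
      exact j.2
    rw [Function.comp_apply, Set.indicator_of_mem hv, Finsupp.prod_embDomain,
      Finsupp.prod_fintype _ _ fun i => hg0 (e i)]
    rfl
  · intro f hf
    apply Set.indicator_of_notMem
    contrapose! hf
    obtain ⟨v, rfl⟩ := (Finsupp.mem_range_embDomain_iff e f).2 (by simpa [e] using hf)
    exact ⟨Finsupp.equivFunOnFinite v, by simp [φ]⟩

theorem summable_finsuppProd_of_nonneg {ι : Type*} {c : ι → ℕ → ℝ} (hc0 : ∀ i, c i 0 = 1)
    (hc : ∀ i k, 0 ≤ c i k) (hcs : ∀ i, Summable (c i))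
    (hsum : Summable fun i => ∑' k, c i (k + 1)) :
    Summable fun f : ι →₀ ℕ => f.prod c := by
  classical
  refine summable_of_sum_le (c := Real.exp (∑' i, ∑' k, c i (k + 1)))
    (fun f => Finset.prod_nonneg fun i _ => hc i _) fun u => ?_
  set s := u.biUnion Finsupp.support
  have htail_nonneg (i : ι) : 0 ≤ ∑' k, c i (k + 1) := tsum_nonneg fun k => hc i _
  calc ∑ f ∈ u, f.prod c
      = ∑ f ∈ u, {f : ι →₀ ℕ | f.support ⊆ s}.indicator (·.prod c) f :=
        Finset.sum_congr rfl fun f hf => by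
          rw [Set.indicator_of_mem (subset_biUnion_of_mem Finsupp.support hf)]
    _ ≤ ∏ i ∈ s, ∑' k, c i k :=
        sum_le_hasSum u
          (fun f _ => Set.indicator_nonneg (fun f _ => prod_nonneg fun i _ => hc i _) f)
          (hasSum_indicator_finsuppProd s hc0 fun i => (hcs i).abs)
    _ = ∏ i ∈ s, (1 + ∑' k, c i (k + 1)) :=
        Finset.prod_congr rfl fun i _ => by rw [(hcs i).tsum_eq_zero_add, hc0]
    _ ≤ Real.exp (∑ i ∈ s, ∑' k, c i (k + 1)) := Real.prod_one_add_le_exp_sum s htail_nonneg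
    _ ≤ Real.exp (∑' i, ∑' k, c i (k + 1)) :=
        Real.exp_le_exp.2 (hsum.sum_le_tsum s fun i _ => htail_nonneg i)

theorem hasProd_tsum_finsuppProd [CompleteSpace 𝕜] {ι : Type*} {g : ι → ℕ → 𝕜}
    (hg0 : ∀ i, g i 0 = 1) (hg : ∀ i, Summable (‖g i ·‖))
    (hsum : Summable fun i => ∑' k, ‖g i (k + 1)‖) :
    HasProd (fun i => ∑' k, g i k) (∑' f : ι →₀ ℕ, f.prod g) := by
  classical
  have hbound : Summable fun f : ι →₀ ℕ => f.prod fun i k => ‖g i k‖ :=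
    summable_finsuppProd_of_nonneg (by simp [hg0]) (fun _ _ => norm_nonneg _) hg hsum
  have htrunc (s : Finset ι) : ∏ i ∈ s, ∑' k, g i k =
      ∑' f, {f : ι →₀ ℕ | f.support ⊆ s}.indicator (·.prod g) f :=
    (hasSum_indicator_finsuppProd s hg0 hg).tsum_eq.symm
  unfold HasProd
  simp_rw [htrunc]
  refine tendsto_tsum_of_dominated_convergence hbound (fun f => ?_) (.of_forall fun s f => ?_)
  · exact tendsto_const_nhds.congr'
      ((eventually_ge_atTop f.support).mono fun s hs => (Set.indicator_of_mem hs _).symm)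
  · refine (norm_indicator_le_norm_self _ _).trans ?_
    simp [Finsupp.prod, norm_prod]

theorem hasProd_inv_one_sub [CompleteSpace 𝕜] {ι : Type*} {b : ι → 𝕜} (hb : ∀ i, ‖b i‖ < 1)
    (hs : Summable (‖b ·‖)) :
    HasProd (fun i => (1 - b i)⁻¹) (∑' f : ι →₀ ℕ, f.prod fun i k => b i ^ k) := by
  have hgeom (i : ι) : Summable fun k => ‖b i ^ k‖ := by
    simpa [norm_pow] using summable_geometric_of_lt_one (norm_nonneg _) (hb i)
  have htail (i : ι) : ∑' k, ‖b i ^ (k + 1)‖ = ‖b i‖ * (1 - ‖b i‖)⁻¹ := by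
    simp [norm_pow, pow_succ', tsum_mul_left, tsum_geometric_of_lt_one (norm_nonneg _) (hb i)]
  have hsum : Summable fun i => ∑' k, ‖b i ^ (k + 1)‖ := by
    simp_rw [htail]
    refine (hs.mul_left 2).of_norm_bounded_eventually ?_
    filter_upwards [hs.tendsto_cofinite_zero.eventually_le_const (by norm_num : (0:ℝ) < 1 / 2)]
      with i hi
    have h1 : 0 < 1 - ‖b i‖ := by linarith [hb i]
    rw [Real.norm_of_nonneg (by positivity), mul_comm]
    gcongr
    rw [inv_le_comm₀ h1 two_pos]
    linarith
  simpa only [tsum_geometric_of_norm_lt_one (hb _)] using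
    hasProd_tsum_finsuppProd (fun i => pow_zero (b i)) hgeom hsum

end ProductOfSeries

def freqCongruentParts (f : ℕ →₀ ℕ) : Multiset ℕ :=
  f.sum fun i k => Multiset.replicate ((i + 1) * k) (i + 1)

theorem count_freqCongruentParts_succ (f : ℕ →₀ ℕ) (i : ℕ) :
    (freqCongruentParts f).count (i + 1) = (i + 1) * f i := by
  rw [freqCongruentParts, Finsupp.sum, Multiset.count_sum', Finset.sum_eq_single i]
  · simp
  · intro j _ hj
    simp [Multiset.count_replicate, hj]
  · intro hi
    simp [Finsupp.notMem_support_iff.1 hi]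

theorem count_freqCongruentParts_zero (f : ℕ →₀ ℕ) : (freqCongruentParts f).count 0 = 0 := by
  simp [freqCongruentParts, Finsupp.sum, Multiset.count_sum', Multiset.count_replicate]

theorem card_freqCongruentParts (f : ℕ →₀ ℕ) :
    Multiset.card (freqCongruentParts f) = f.sum fun i k => (i + 1) * k := by
  simp [freqCongruentParts, Finsupp.sum, Multiset.card_sum]

theorem sum_freqCongruentParts (f : ℕ →₀ ℕ) :
    (freqCongruentParts f).sum = f.sum fun i k => (i + 1) * k * (i + 1) := by
  simp [freqCongruentParts, Finsupp.sum, Multiset.sum_sum]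

theorem pos_of_mem_freqCongruentParts {f : ℕ →₀ ℕ} {a : ℕ} (ha : a ∈ freqCongruentParts f) :
    0 < a :=
  Nat.pos_of_ne_zero fun h => by simp [h, ← Multiset.count_pos, count_freqCongruentParts_zero] at ha

theorem freqCongruent_sort_freqCongruentParts (f : ℕ →₀ ℕ) :
    FreqCongruent ((freqCongruentParts f).sort (· ≥ ·)) := by
  intro a ha
  obtain ⟨i, rfl⟩ := Nat.exists_eq_succ_of_ne_zero ha.ne'
  rw [← Multiset.coe_count, Multiset.sort_eq, count_freqCongruentParts_succ]
  exact dvd_mul_right _ _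

noncomputable def scaledFreq (l : List ℕ) : ℕ →₀ ℕ :=
  Finsupp.onFinset (l.toFinset.image (· - 1)) (fun i => l.count (i + 1) / (i + 1))
    fun i hi => Finset.mem_image.2
      ⟨i + 1, List.mem_toFinset.2 (List.count_pos_iff.1 (Nat.pos_of_ne_zero
        fun h => hi (by rw [h, Nat.zero_div]))), rfl⟩

theorem scaledFreq_apply (l : List ℕ) (i : ℕ) : scaledFreq l i = l.count (i + 1) / (i + 1) := rfl

theorem freqCongruentParts_scaledFreq {l : List ℕ} (hpos : ∀ x ∈ l, 0 < x)
    (hfc : FreqCongruent l) : freqCongruentParts (scaledFreq l) = l := by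
  ext a
  rcases a with _ | i
  · rw [count_freqCongruentParts_zero, Multiset.coe_count, eq_comm, List.count_eq_zero]
    exact fun h => (hpos 0 h).false
  · rw [count_freqCongruentParts_succ, scaledFreq_apply, Nat.mul_div_cancel' (hfc _ i.succ_pos),
      Multiset.coe_count]

noncomputable def freqCongruentEquiv :
    {l : List ℕ // IsPartition l ∧ FreqCongruent l} ≃ (ℕ →₀ ℕ) where
  toFun l := scaledFreq l
  invFun f := ⟨(freqCongruentParts f).sort (· ≥ ·),
    ⟨Multiset.pairwise_sort _ _, fun _ ha =>
      pos_of_mem_freqCongruentParts ((Multiset.mem_sort _).1 ha)⟩,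
    freqCongruent_sort_freqCongruentParts f⟩
  left_inv := by
    rintro ⟨l, ⟨hsorted, hpos⟩, hfc⟩
    ext1
    simp only [freqCongruentParts_scaledFreq hpos hfc, Multiset.coe_sort]
    exact List.mergeSort_eq_self _ hsorted
  right_inv f := by
    ext i
    simp [scaledFreq_apply, ← Multiset.coe_count, count_freqCongruentParts_succ]

theorem pow_card_mul_pow_sum_freqCongruentParts {M : Type*} [CommMonoid M] (x q : M)
    (f : ℕ →₀ ℕ) :
    x ^ Multiset.card (freqCongruentParts f) * q ^ (freqCongruentParts f).sum =
      f.prod fun i k => (x ^ (i + 1) * q ^ ((i + 1) ^ 2)) ^ k := by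
  rw [card_freqCongruentParts, sum_freqCongruentParts, Finsupp.sum, Finsupp.sum,
    ← Finset.prod_pow_eq_pow_sum, ← Finset.prod_pow_eq_pow_sum, ← Finset.prod_mul_distrib]
  refine Finset.prod_congr rfl fun i _ => ?_
  dsimp only
  rw [mul_pow, ← pow_mul, ← pow_mul]
  ring_nf

theorem stmt18 (x q : ℂ) (hx : ‖x‖ < 1) (hq : ‖q‖ < 1) :
    (∏' n : ℕ, (1 - x ^ (n + 1) * q ^ ((n + 1) ^ 2))⁻¹)
      = ∑' l : {l : List ℕ // IsPartition l ∧ FreqCongruent l},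
          x ^ (l : List ℕ).length * q ^ (l : List ℕ).sum := by
  set b : ℕ → ℂ := fun n => x ^ (n + 1) * q ^ ((n + 1) ^ 2)
  have hb (n : ℕ) : ‖b n‖ ≤ ‖x‖ ^ (n + 1) := by
    simpa [b, norm_mul, norm_pow] using
      mul_le_of_le_one_right (by positivity) (pow_le_one₀ (norm_nonneg q) hq.le)
  have hprod := hasProd_inv_one_sub
    (fun n => (hb n).trans_lt (pow_lt_one₀ (norm_nonneg x) hx n.succ_ne_zero))
    (.of_nonneg_of_le (fun _ => norm_nonneg _) hb
      ((summable_nat_add_iff 1).2 (summable_geometric_of_lt_one (norm_nonneg x) hx)))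
  rw [hprod.tprod_eq, ← freqCongruentEquiv.symm.tsum_eq]
  refine tsum_congr fun f => ?_
  rw [← pow_card_mul_pow_sum_freqCongruentParts]
  simp [freqCongruentEquiv, Multiset.length_sort, ← Multiset.sum_coe]
end
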